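/- arXiv:1805.03851 — 2 statements merged into one kernel-verified Lean document; each statement's English description precedes it below -/
import Mathlib

section
/- Dual basis identities for the enriched cubic element FE_ec: define f_i(v) = ⨍_{e_i} ∂_n v and g_i(v) = ⨍_{e_i} (1/2 − λ_{i+1}) ∂_n v, and set φ_i = (−1/‖∇λ_i‖) λ_i (2λ_i − 1)(λ_i − 1) and ψ_i = (1/‖∇λ_i‖)[ 2(λ_i²λ_{i+1} − λ_iλ_{i+1}²) − 8(λ_{i+1}²λ_{i+2} − λ_{i+1}λ_{i+2}²) + 2(λ_{i+2}²λ_i − λ_{i+2}λ_i²) + 40(λ_{i+1} − λ_{i+2})Λ ] for i = 1,2,3. Then for all i, j, k, l ∈ {1,2,3}: f_i(φ_j) = δ_{ij}, g_k(φ_l) = 0, f_i(ψ_j) = 0, and g_k(ψ_l) = δ_{kl}. -/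
open MeasureTheory
open scoped RealInnerProductSpace

noncomputable section

/-- Points of the plane `ℝ²`. -/
abbrev Pt := EuclideanSpace ℝ (Fin 2)

/-- `p : ℝ² → ℝ` is a real polynomial function of total degree at most `k`. -/
def IsPolyDeg (k : ℕ) (p : Pt → ℝ) : Prop :=
  ∃ q : MvPolynomial (Fin 2) ℝ, q.totalDegree ≤ k ∧
    ∀ x : Pt, p x = MvPolynomial.eval (fun j => x j) q

/-- Average of `f` over the edge `e_i` (the segment from `a (i+1)` to `a (i+2)`,
opposite the vertex `a i`) with respect to the 1-dimensional Hausdorff measure. -/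
def edgeAvg (a : Fin 3 → Pt) (i : Fin 3) (f : Pt → ℝ) : ℝ :=
  ⨍ x in segment ℝ (a (i+1)) (a (i+2)), f x ∂(μH[1])

/-- Average of `f` over the triangle `T` (the convex hull of the vertices)
with respect to the 2-dimensional Lebesgue measure. -/
def triAvg (a : Fin 3 → Pt) (f : Pt → ℝ) : ℝ :=
  ⨍ x in convexHull ℝ (Set.range a), f x

/-- The normal derivative `∂ₙ v = ∇v ⬝ n_i` on the edge `e_i`, where
`n_i = -∇λ_i / ‖∇λ_i‖` and `g i = ∇λ_i`. -/
def nderiv (g : Fin 3 → Pt) (i : Fin 3) (v : Pt → ℝ) (x : Pt) : ℝ :=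
  ⟪gradient v x, -(‖g i‖⁻¹ • g i)⟫

/-- `φ_i = (-1/‖∇λ_i‖) λ_i (2λ_i - 1)(λ_i - 1)`. -/
def phiEC (g : Fin 3 → Pt) (lam : Fin 3 → Pt → ℝ) (i : Fin 3) (x : Pt) : ℝ :=
  (-1 / ‖g i‖) * (lam i x * (2 * lam i x - 1) * (lam i x - 1))

/-- `ψ_i = (1/‖∇λ_i‖)[2(λ_i²λ_{i+1} - λ_iλ_{i+1}²) - 8(λ_{i+1}²λ_{i+2} - λ_{i+1}λ_{i+2}²)
  + 2(λ_{i+2}²λ_i - λ_{i+2}λ_i²) + 40(λ_{i+1} - λ_{i+2})Λ]`. -/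
def psiEC (g : Fin 3 → Pt) (lam : Fin 3 → Pt → ℝ) (i : Fin 3) (x : Pt) : ℝ :=
  (1 / ‖g i‖) *
    (2 * (lam i x ^ 2 * lam (i+1) x - lam i x * lam (i+1) x ^ 2)
     - 8 * (lam (i+1) x ^ 2 * lam (i+2) x - lam (i+1) x * lam (i+2) x ^ 2)
     + 2 * (lam (i+2) x ^ 2 * lam i x - lam (i+2) x * lam i x ^ 2)
     + 40 * ((lam (i+1) x - lam (i+2) x) * (lam 0 x * lam 1 x * lam 2 x)))


open Topology
open scoped ENNReal NNReal

lemma segment_map (u w : Pt) :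
    (μH[1] : Measure Pt).restrict (segment ℝ u w) =
      Measure.map (fun t : ℝ => AffineMap.lineMap u w t)
        ((nndist u w : ℝ≥0∞) • (volume : Measure ℝ).restrict (Set.Icc 0 1)) := by
  have hcont : Continuous (fun t : ℝ => AffineMap.lineMap u w t) :=
    AffineMap.lineMap_continuous
  ext A hA
  rw [Measure.map_apply hcont.measurable hA, Measure.restrict_apply hA,
    Measure.smul_apply, Measure.restrict_apply (hcont.measurable hA)]
  have himg : A ∩ segment ℝ u w
      = (fun t : ℝ => AffineMap.lineMap u w t) ''
          (Set.Icc 0 1 ∩ (fun t : ℝ => AffineMap.lineMap u w t) ⁻¹' A) := by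
    rw [Set.image_inter_preimage, segment_eq_image_lineMap, Set.inter_comm]
  rw [himg, MeasureTheory.hausdorffMeasure_lineMap_image u w _, smul_eq_mul,
    MeasureTheory.hausdorffMeasure_real, Set.inter_comm]
  simp [ENNReal.smul_def]

lemma lineMap_emb (u w : Pt) (huw : u ≠ w) :
    MeasurableEmbedding (fun t : ℝ => AffineMap.lineMap u w t) := by
  have h1 : IsClosedEmbedding (fun t : ℝ => t • (w - u)) :=
    isClosedEmbedding_smul_left (sub_ne_zero.mpr (Ne.symm huw))
  have h2 : IsClosedEmbedding (fun t : ℝ => AffineMap.lineMap u w t) := by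
    have : (fun t : ℝ => AffineMap.lineMap u w t)
        = (fun y : Pt => y + u) ∘ (fun t : ℝ => t • (w - u)) := by
      funext t; simp [AffineMap.lineMap_apply_module']
    rw [this]
    exact (Homeomorph.addRight u).isClosedEmbedding.comp h1
  exact h2.measurableEmbedding

lemma segment_avg_poly (u w : Pt) (huw : u ≠ w) (f : Pt → ℝ) (c0 c1 c2 c3 c4 : ℝ)
    (hp : ∀ t : ℝ, f (AffineMap.lineMap u w t) = c0 + c1*t + c2*t^2 + c3*t^3 + c4*t^4) :
    (⨍ x in segment ℝ u w, f x ∂(μH[1])) = c0 + c1/2 + c2/3 + c3/4 + c4/5 := by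
  have hd : dist u w ≠ 0 := dist_ne_zero.mpr huw
  rw [setAverage_eq, segment_map u w, (lineMap_emb u w huw).integral_map]
  simp only [hp]
  rw [integral_smul_measure]
  rw [MeasureTheory.integral_Icc_eq_integral_Ioc, ← intervalIntegral.integral_of_le zero_le_one]
  have : ∫ t in (0:ℝ)..1, (c0 + c1*t + c2*t^2 + c3*t^3 + c4*t^4)
      = c0 + c1/2 + c2/3 + c3/4 + c4/5 := by
    have h1 : ∀ t ∈ Set.uIcc (0:ℝ) 1, HasDerivAt
        (fun t : ℝ => c0*t + c1*t^2/2 + c2*t^3/3 + c3*t^4/4 + c4*t^5/5)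
        (c0 + c1*t + c2*t^2 + c3*t^3 + c4*t^4) t := by
      intro t _
      have := (((((hasDerivAt_id t).const_mul c0).add
        (((hasDerivAt_pow 2 t).const_mul c1).div_const 2)).add
        (((hasDerivAt_pow 3 t).const_mul c2).div_const 3)).add
        (((hasDerivAt_pow 4 t).const_mul c3).div_const 4)).add
        (((hasDerivAt_pow 5 t).const_mul c4).div_const 5)
      exact this.congr_deriv (by push_cast; ring)
    rw [intervalIntegral.integral_eq_sub_of_hasDerivAt h1
      ((by fun_prop : Continuous fun t:ℝ => c0 + c1*t + c2*t^2 + c3*t^3 + c4*t^4).intervalIntegrable _ _)]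
    norm_num
  rw [this]
  rw [MeasureTheory.measureReal_def, MeasureTheory.hausdorffMeasure_segment]
  simp only [edist_dist, ENNReal.toReal_smul, ENNReal.toReal_ofReal dist_nonneg, smul_eq_mul,
    ENNReal.coe_toReal, coe_nndist]
  field_simp

lemma edgeAvg_poly (a : Fin 3 → Pt) (i : Fin 3) (huw : a (i+1) ≠ a (i+2)) (f : Pt → ℝ)
    (c0 c1 c2 c3 c4 : ℝ)
    (hp : ∀ t : ℝ, f (AffineMap.lineMap (a (i+1)) (a (i+2)) t)
      = c0 + c1*t + c2*t^2 + c3*t^3 + c4*t^4) :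
    edgeAvg a i f = c0 + c1/2 + c2/3 + c3/4 + c4/5 :=
  segment_avg_poly _ _ huw f c0 c1 c2 c3 c4 hp

variable {g : Fin 3 → Pt} {c : Fin 3 → ℝ} {lam : Fin 3 → Pt → ℝ}

lemma hasFDerivAt_lam (hlam : ∀ i x, lam i x = ⟪g i, x⟫ + c i) (k : Fin 3) (x : Pt) :
    HasFDerivAt (lam k) (innerSL ℝ (g k)) x := by
  have : lam k = fun x => innerSL ℝ (g k) x + c k := by
    funext y; simp [hlam k y]
  rw [this]
  exact (innerSL ℝ (g k)).hasFDerivAt.add_const (c k)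

lemma nderiv_eq (i : Fin 3) {v : Pt → ℝ} {L : Pt →L[ℝ] ℝ} {x : Pt}
    (h : HasFDerivAt v L x) : nderiv g i v x = L (-(‖g i‖⁻¹ • g i)) := by
  rw [nderiv, gradient, InnerProductSpace.toDual_symm_apply, h.fderiv]

lemma nderiv_phi (hlam : ∀ i x, lam i x = ⟪g i, x⟫ + c i) (i l : Fin 3) (x : Pt) :
    nderiv g i (phiEC g lam l) x
      = (-1 / ‖g l‖) * (6 * lam l x ^ 2 - 6 * lam l x + 1) * ⟪g l, -(‖g i‖⁻¹ • g i)⟫ := by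
  have h := hasFDerivAt_lam hlam l x
  have H : HasFDerivAt (phiEC g lam l) _ x :=
    (((h.mul ((h.const_mul 2).sub_const 1)).mul (h.sub_const 1)).const_mul (-1 / ‖g l‖))
  rw [nderiv_eq i H]
  simp only [ContinuousLinearMap.add_apply, ContinuousLinearMap.smul_apply,
    ContinuousLinearMap.coe_smul', Pi.smul_apply, smul_eq_mul, innerSL_apply_apply, Pi.mul_apply, Pi.sub_apply]
  ring

lemma nderiv_psi (hlam : ∀ i x, lam i x = ⟪g i, x⟫ + c i) (i l : Fin 3) (x : Pt) :
    nderiv g i (psiEC g lam l) x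
      = (1 / ‖g l‖) *
        ((2 * (2 * lam l x * lam (l+1) x - lam (l+1) x ^ 2)
            + 2 * (lam (l+2) x ^ 2 - 2 * lam (l+2) x * lam l x)) * ⟪g l, -(‖g i‖⁻¹ • g i)⟫
         + (2 * (lam l x ^ 2 - 2 * lam l x * lam (l+1) x)
            - 8 * (2 * lam (l+1) x * lam (l+2) x - lam (l+2) x ^ 2)) * ⟪g (l+1), -(‖g i‖⁻¹ • g i)⟫
         + (-8 * (lam (l+1) x ^ 2 - 2 * lam (l+1) x * lam (l+2) x)
            + 2 * (2 * lam (l+2) x * lam l x - lam l x ^ 2)) * ⟪g (l+2), -(‖g i‖⁻¹ • g i)⟫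
         + 40 * (⟪g (l+1), -(‖g i‖⁻¹ • g i)⟫ - ⟪g (l+2), -(‖g i‖⁻¹ • g i)⟫)
            * (lam 0 x * lam 1 x * lam 2 x)
         + 40 * (lam (l+1) x - lam (l+2) x)
            * (lam 1 x * lam 2 x * ⟪g 0, -(‖g i‖⁻¹ • g i)⟫
               + lam 0 x * lam 2 x * ⟪g 1, -(‖g i‖⁻¹ • g i)⟫
               + lam 0 x * lam 1 x * ⟪g 2, -(‖g i‖⁻¹ • g i)⟫)) := by
  have h := fun k => hasFDerivAt_lam hlam k x
  have hpsi : psiEC g lam l = fun x =>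
      (1 / ‖g l‖) *
        (2 * (lam l x * lam l x * lam (l+1) x - lam l x * (lam (l+1) x * lam (l+1) x))
         - 8 * (lam (l+1) x * lam (l+1) x * lam (l+2) x - lam (l+1) x * (lam (l+2) x * lam (l+2) x))
         + 2 * (lam (l+2) x * lam (l+2) x * lam l x - lam (l+2) x * (lam l x * lam l x))
         + 40 * ((lam (l+1) x - lam (l+2) x) * (lam 0 x * lam 1 x * lam 2 x))) := by
    funext y; rw [psiEC]; ring
  rw [hpsi]
  refine (nderiv_eq i (((((((((h l).mul (h l)).mul (h (l+1))).sub ((h l).mul ((h (l+1)).mul (h (l+1))))).const_mul (2:ℝ)).sub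
      (((((h (l+1)).mul (h (l+1))).mul (h (l+2))).sub ((h (l+1)).mul ((h (l+2)).mul (h (l+2))))).const_mul (8:ℝ))).add
      (((((h (l+2)).mul (h (l+2))).mul (h l)).sub ((h (l+2)).mul ((h l).mul (h l)))).const_mul (2:ℝ))).add
      ((((h (l+1)).sub (h (l+2))).mul (((h 0).mul (h 1)).mul (h 2))).const_mul (40:ℝ))).const_mul (1 / ‖g l‖))).trans ?_
  simp only [ContinuousLinearMap.add_apply, ContinuousLinearMap.sub_apply,
    ContinuousLinearMap.smul_apply, ContinuousLinearMap.coe_smul', Pi.smul_apply,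
    smul_eq_mul, innerSL_apply_apply, Pi.mul_apply, Pi.sub_apply]
  ring

lemma nderiv_psi' (hlam : ∀ i x, lam i x = ⟪g i, x⟫ + c i) (i l : Fin 3) (x : Pt) :
    nderiv g i (psiEC g lam l) x
      = (1 / ‖g l‖) *
        ((2 * (2 * lam l x * lam (l+1) x - lam (l+1) x ^ 2)
            + 2 * (lam (l+2) x ^ 2 - 2 * lam (l+2) x * lam l x)) * ⟪g l, -(‖g i‖⁻¹ • g i)⟫
         + (2 * (lam l x ^ 2 - 2 * lam l x * lam (l+1) x)
            - 8 * (2 * lam (l+1) x * lam (l+2) x - lam (l+2) x ^ 2)) * ⟪g (l+1), -(‖g i‖⁻¹ • g i)⟫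
         + (-8 * (lam (l+1) x ^ 2 - 2 * lam (l+1) x * lam (l+2) x)
            + 2 * (2 * lam (l+2) x * lam l x - lam l x ^ 2)) * ⟪g (l+2), -(‖g i‖⁻¹ • g i)⟫
         + 40 * (⟪g (l+1), -(‖g i‖⁻¹ • g i)⟫ - ⟪g (l+2), -(‖g i‖⁻¹ • g i)⟫)
            * (lam i x * lam (i+1) x * lam (i+2) x)
         + 40 * (lam (l+1) x - lam (l+2) x)
            * (lam (i+1) x * lam (i+2) x * ⟪g i, -(‖g i‖⁻¹ • g i)⟫
               + lam i x * lam (i+2) x * ⟪g (i+1), -(‖g i‖⁻¹ • g i)⟫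
               + lam i x * lam (i+1) x * ⟪g (i+2), -(‖g i‖⁻¹ • g i)⟫)) := by
  rw [nderiv_psi hlam i l]
  have e1 : lam 0 x * lam 1 x * lam 2 x = lam i x * lam (i+1) x * lam (i+2) x := by
    fin_cases i <;> simp <;> ring
  have e2 : lam 1 x * lam 2 x * ⟪g 0, -(‖g i‖⁻¹ • g i)⟫
        + lam 0 x * lam 2 x * ⟪g 1, -(‖g i‖⁻¹ • g i)⟫
        + lam 0 x * lam 1 x * ⟪g 2, -(‖g i‖⁻¹ • g i)⟫
      = lam (i+1) x * lam (i+2) x * ⟪g i, -(‖g i‖⁻¹ • g i)⟫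
        + lam i x * lam (i+2) x * ⟪g (i+1), -(‖g i‖⁻¹ • g i)⟫
        + lam i x * lam (i+1) x * ⟪g (i+2), -(‖g i‖⁻¹ • g i)⟫ := by
    fin_cases i <;> simp <;> ring
  rw [e1, e2]

lemma gsum_eq_zero (a : Fin 3 → Pt) (ha : AffineIndependent ℝ a)
    (g : Fin 3 → Pt) (c : Fin 3 → ℝ) (lam : Fin 3 → Pt → ℝ)
    (hlam : ∀ i x, lam i x = ⟪g i, x⟫ + c i)
    (hdual : ∀ i j, lam i (a j) = if i = j then 1 else 0) :
    g 0 + g 1 + g 2 = 0 := by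
  set G := g 0 + g 1 + g 2 with hG
  have hinn : ∀ p q : Pt, ⟪G, p - q⟫ =
      (lam 0 p + lam 1 p + lam 2 p) - (lam 0 q + lam 1 q + lam 2 q) := by
    intro p q
    simp only [hG, inner_add_left, inner_sub_right, hlam]
    ring
  have h1 : ⟪G, a 1 - a 0⟫ = 0 := by rw [hinn]; simp [hdual]
  have h2 : ⟪G, a 2 - a 0⟫ = 0 := by rw [hinn]; simp [hdual]
  have hli : LinearIndependent ℝ (fun k : {x : Fin 3 // x ≠ 0} => a ↑k - a 0) := by
    have := (affineIndependent_iff_linearIndependent_vsub ℝ a 0).mp ha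
    simpa [vsub_eq_sub] using this
  have hcard : Fintype.card {x : Fin 3 // x ≠ 0} = Module.finrank ℝ Pt := by
    simp [finrank_euclideanSpace_fin]
  have : Nonempty {x : Fin 3 // x ≠ 0} := ⟨⟨1, by decide⟩⟩
  have hsp := hli.span_eq_top_of_card_eq_finrank hcard
  have hall : ∀ v : Pt, ⟪G, v⟫ = 0 := by
    intro v
    have hv : v ∈ Submodule.span ℝ (Set.range fun k : {x : Fin 3 // x ≠ 0} => a ↑k - a 0) := by
      rw [hsp]; trivial
    induction hv using Submodule.span_induction with
    | mem x hx =>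
      obtain ⟨k, rfl⟩ := hx
      fin_cases k
      · exact h1
      · exact h2
    | zero => simp
    | add x y _ _ hx hy => rw [inner_add_right, hx, hy]; ring
    | smul r x _ hx => rw [real_inner_smul_right, hx]; ring
  exact inner_self_eq_zero.mp (hall G)

set_option maxHeartbeats 3000000 in
/-- Dual basis identities for the enriched cubic element FE_ec, where
`f_i(v) = ⨍_{e_i} ∂ₙ v` and `g_i(v) = ⨍_{e_i} (1/2 - λ_{i+1}) ∂ₙ v`. -/
theorem FE_ec_dual_basis
    (a : Fin 3 → Pt) (ha : AffineIndependent ℝ a)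
    (g : Fin 3 → Pt) (c : Fin 3 → ℝ) (lam : Fin 3 → Pt → ℝ)
    (hlam : ∀ i x, lam i x = ⟪g i, x⟫ + c i)
    (hdual : ∀ i j, lam i (a j) = if i = j then 1 else 0) :
    ∀ i j : Fin 3,
      (edgeAvg a i (nderiv g i (phiEC g lam j)) = if i = j then 1 else 0) ∧
      (edgeAvg a i (fun x => (1/2 - lam (i+1) x) * nderiv g i (phiEC g lam j) x) = 0) ∧
      (edgeAvg a i (nderiv g i (psiEC g lam j)) = 0) ∧
      (edgeAvg a i (fun x => (1/2 - lam (i+1) x) * nderiv g i (psiEC g lam j) x) =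
        if i = j then 1 else 0) := by
  intro i j
  have hf1 : ∀ i : Fin 3, i + 1 + 1 = i + 2 := by decide
  have hf2 : ∀ i : Fin 3, i + 1 + 2 = i := by decide
  have hf3 : ∀ i : Fin 3, i + 2 + 1 = i := by decide
  have hf4 : ∀ i : Fin 3, i + 2 + 2 = i + 1 := by decide
  have hne1 : ∀ i : Fin 3, i ≠ i + 1 := by decide
  have hne2 : ∀ i : Fin 3, i ≠ i + 2 := by decide
  have hne12 : ∀ i : Fin 3, i + 1 ≠ i + 2 := by decide
  have hG : g 0 + g 1 + g 2 = 0 := gsum_eq_zero a ha g c lam hlam hdual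
  have hgnz : ∀ k : Fin 3, g k ≠ 0 := by
    intro k hk
    have h1 : lam k (a k) = 1 := by rw [hdual, if_pos rfl]
    have h0 : lam k (a (k+1)) = 0 := by rw [hdual, if_neg (hne1 k)]
    rw [hlam] at h1 h0
    rw [hk] at h1 h0
    simp only [inner_zero_left, zero_add] at h1 h0
    rw [h1] at h0
    norm_num at h0
  have hni : ∀ k : Fin 3, ‖g k‖ ≠ 0 := fun k => norm_ne_zero_iff.mpr (hgnz k)
  have huw : a (i+1) ≠ a (i+2) := fun h => hne12 i (ha.injective h)
  have hline : ∀ (k : Fin 3) (t : ℝ), lam k (AffineMap.lineMap (a (i+1)) (a (i+2)) t)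
      = (1-t) * lam k (a (i+1)) + t * lam k (a (i+2)) := by
    intro k t
    rw [AffineMap.lineMap_apply_module]
    simp only [hlam, inner_add_right, real_inner_smul_right]
    ring
  have hl0 : ∀ t : ℝ, lam i (AffineMap.lineMap (a (i+1)) (a (i+2)) t) = 0 := by
    intro t
    rw [hline, hdual, hdual, if_neg (hne1 i), if_neg (hne2 i)]
    ring
  have hl1 : ∀ t : ℝ, lam (i+1) (AffineMap.lineMap (a (i+1)) (a (i+2)) t) = 1 - t := by
    intro t
    rw [hline, hdual, hdual, if_pos rfl, if_neg (hne12 i)]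
    ring
  have hl2 : ∀ t : ℝ, lam (i+2) (AffineMap.lineMap (a (i+1)) (a (i+2)) t) = t := by
    intro t
    rw [hline, hdual, hdual, if_neg (Ne.symm (hne12 i)), if_pos rfl]
    ring
  have hBi : ⟪g i, -(‖g i‖⁻¹ • g i)⟫ = -‖g i‖ := by
    rw [inner_neg_right, real_inner_smul_right, real_inner_self_eq_norm_mul_norm]
    field_simp
  have hBsum : ⟪g i, -(‖g i‖⁻¹ • g i)⟫ + ⟪g (i+1), -(‖g i‖⁻¹ • g i)⟫
      + ⟪g (i+2), -(‖g i‖⁻¹ • g i)⟫ = 0 := by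
    have hperm : g i + g (i+1) + g (i+2) = g 0 + g 1 + g 2 := by
      fin_cases i <;> simp <;> abel
    rw [← inner_add_left, ← inner_add_left, hperm, hG, inner_zero_left]
  have hB2 : ⟪g (i+2), -(‖g i‖⁻¹ • g i)⟫ = -⟪g i, -(‖g i‖⁻¹ • g i)⟫
      - ⟪g (i+1), -(‖g i‖⁻¹ • g i)⟫ := by linarith
  have hcases : ∀ i j : Fin 3, j = i ∨ j = i + 1 ∨ j = i + 2 := by decide
  rcases hcases i j with h0 | rfl | rfl
  · obtain rfl := h0.symm
    refine ⟨?_, ?_, ?_, ?_⟩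
    · refine (edgeAvg_poly a i huw (nderiv g i (phiEC g lam i))
        ((1/‖g i‖) * ((-1) * ⟪g i, -(‖g i‖⁻¹ • g i)⟫)) (0) (0) (0) (0)
        (fun t => ?_)).trans ?_
      · simp only [nderiv_phi hlam i i, hf1, hf2, hf3, hf4, hl0, hl1, hl2]
        ring
      · rw [if_pos rfl, hBi]; field_simp [hni i]; norm_num
    · refine (edgeAvg_poly a i huw (fun x => (1/2 - lam (i+1) x) * nderiv g i (phiEC g lam i) x)
        ((1/‖g i‖) * (((1)/2) * ⟪g i, -(‖g i‖⁻¹ • g i)⟫)) ((1/‖g i‖) * ((-1) * ⟪g i, -(‖g i‖⁻¹ • g i)⟫)) (0) (0) (0)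
        (fun t => ?_)).trans ?_
      · simp only [nderiv_phi hlam i i, hf1, hf2, hf3, hf4, hl0, hl1, hl2]
        ring
      · ring
    · refine (edgeAvg_poly a i huw (nderiv g i (psiEC g lam i))
        ((1/‖g i‖) * ((-2) * ⟪g i, -(‖g i‖⁻¹ • g i)⟫ + (-8) * ⟪g (i+2), -(‖g i‖⁻¹ • g i)⟫)) ((1/‖g i‖) * ((44) * ⟪g i, -(‖g i‖⁻¹ • g i)⟫ + (-16) * ⟪g (i+1), -(‖g i‖⁻¹ • g i)⟫ + (32) * ⟪g (i+2), -(‖g i‖⁻¹ • g i)⟫)) ((1/‖g i‖) * ((-120) * ⟪g i, -(‖g i‖⁻¹ • g i)⟫ + (24) * ⟪g (i+1), -(‖g i‖⁻¹ • g i)⟫ + (-24) * ⟪g (i+2), -(‖g i‖⁻¹ • g i)⟫)) ((1/‖g i‖) * ((80) * ⟪g i, -(‖g i‖⁻¹ • g i)⟫)) (0)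
        (fun t => ?_)).trans ?_
      · simp only [nderiv_psi' hlam i i, hf1, hf2, hf3, hf4, hl0, hl1, hl2]
        ring
      · ring
    · refine (edgeAvg_poly a i huw (fun x => (1/2 - lam (i+1) x) * nderiv g i (psiEC g lam i) x)
        ((1/‖g i‖) * ((1) * ⟪g i, -(‖g i‖⁻¹ • g i)⟫ + (4) * ⟪g (i+2), -(‖g i‖⁻¹ • g i)⟫)) ((1/‖g i‖) * ((-24) * ⟪g i, -(‖g i‖⁻¹ • g i)⟫ + (8) * ⟪g (i+1), -(‖g i‖⁻¹ • g i)⟫ + (-24) * ⟪g (i+2), -(‖g i‖⁻¹ • g i)⟫)) ((1/‖g i‖) * ((104) * ⟪g i, -(‖g i‖⁻¹ • g i)⟫ + (-28) * ⟪g (i+1), -(‖g i‖⁻¹ • g i)⟫ + (44) * ⟪g (i+2), -(‖g i‖⁻¹ • g i)⟫)) ((1/‖g i‖) * ((-160) * ⟪g i, -(‖g i‖⁻¹ • g i)⟫ + (24) * ⟪g (i+1), -(‖g i‖⁻¹ • g i)⟫ + (-24) * ⟪g (i+2), -(‖g i‖⁻¹ • g i)⟫)) ((1/‖g i‖) * ((80)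 * ⟪g i, -(‖g i‖⁻¹ • g i)⟫))
        (fun t => ?_)).trans ?_
      · simp only [nderiv_psi' hlam i i, hf1, hf2, hf3, hf4, hl0, hl1, hl2]
        ring
      · rw [if_pos rfl, hB2, hBi]
        generalize ⟪g (i+1), -(‖g i‖⁻¹ • g i)⟫ = X
        have hN : ‖g i‖ ≠ 0 := hni i
        field_simp
        ring
  · refine ⟨?_, ?_, ?_, ?_⟩
    · refine (edgeAvg_poly a i huw (nderiv g i (phiEC g lam (i+1)))
        ((1/‖g (i+1)‖) * ((-1) * ⟪g (i+1), -(‖g i‖⁻¹ • g i)⟫)) ((1/‖g (i+1)‖) * ((6) * ⟪g (i+1), -(‖g i‖⁻¹ • g i)⟫)) ((1/‖g (i+1)‖) * ((-6) * ⟪g (i+1), -(‖g i‖⁻¹ • g i)⟫)) (0) (0)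
        (fun t => ?_)).trans ?_
      · simp only [nderiv_phi hlam i (i+1), hf1, hf2, hf3, hf4, hl0, hl1, hl2]
        ring
      · rw [if_neg (hne1 i)]; ring
    · refine (edgeAvg_poly a i huw (fun x => (1/2 - lam (i+1) x) * nderiv g i (phiEC g lam (i+1)) x)
        ((1/‖g (i+1)‖) * (((1)/2) * ⟪g (i+1), -(‖g i‖⁻¹ • g i)⟫)) ((1/‖g (i+1)‖) * ((-4) * ⟪g (i+1), -(‖g i‖⁻¹ • g i)⟫)) ((1/‖g (i+1)‖) * ((9) * ⟪g (i+1), -(‖g i‖⁻¹ • g i)⟫)) ((1/‖g (i+1)‖) * ((-6) * ⟪g (i+1), -(‖g i‖⁻¹ • g i)⟫)) (0)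
        (fun t => ?_)).trans ?_
      · simp only [nderiv_phi hlam i (i+1), hf1, hf2, hf3, hf4, hl0, hl1, hl2]
        ring
      · ring
    · refine (edgeAvg_poly a i huw (nderiv g i (psiEC g lam (i+1)))
        ((1/‖g (i+1)‖) * ((-2) * ⟪g i, -(‖g i‖⁻¹ • g i)⟫ + (2) * ⟪g (i+2), -(‖g i‖⁻¹ • g i)⟫)) ((1/‖g (i+1)‖) * ((4) * ⟪g i, -(‖g i‖⁻¹ • g i)⟫ + (4) * ⟪g (i+1), -(‖g i‖⁻¹ • g i)⟫ + (-8) * ⟪g (i+2), -(‖g i‖⁻¹ • g i)⟫)) ((1/‖g (i+1)‖) * ((30) * ⟪g i, -(‖g i‖⁻¹ • g i)⟫ + (-6) * ⟪g (i+1), -(‖g i‖⁻¹ • g i)⟫ + (6) * ⟪g (i+2), -(‖g i‖⁻¹ • g i)⟫)) ((1/‖g (i+1)‖) * ((-40) * ⟪g i, -(‖g i‖⁻¹ • g i)⟫)) (0)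
        (fun t => ?_)).trans ?_
      · simp only [nderiv_psi' hlam i (i+1), hf1, hf2, hf3, hf4, hl0, hl1, hl2]
        ring
      · ring
    · refine (edgeAvg_poly a i huw (fun x => (1/2 - lam (i+1) x) * nderiv g i (psiEC g lam (i+1)) x)
        ((1/‖g (i+1)‖) * ((1) * ⟪g i, -(‖g i‖⁻¹ • g i)⟫ + (-1) * ⟪g (i+2), -(‖g i‖⁻¹ • g i)⟫)) ((1/‖g (i+1)‖) * ((-4) * ⟪g i, -(‖g i‖⁻¹ • g i)⟫ + (-2) * ⟪g (i+1), -(‖g i‖⁻¹ • g i)⟫ + (6) * ⟪g (i+2), -(‖g i‖⁻¹ • g i)⟫)) ((1/‖g (i+1)‖) * ((-11) * ⟪g i, -(‖g i‖⁻¹ • g i)⟫ + (7) * ⟪g (i+1), -(‖g i‖⁻¹ • g i)⟫ + (-11) * ⟪g (i+2), -(‖g i‖⁻¹ • g i)⟫)) ((1/‖g (i+1)‖) * ((50) * ⟪g i, -(‖g i‖⁻¹ • g i)⟫ + (-6) * ⟪g (i+1), -(‖g i‖⁻¹ • g i)⟫ + (6) * ⟪g (i+2), -(‖g i‖⁻¹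 • g i)⟫)) ((1/‖g (i+1)‖) * ((-40) * ⟪g i, -(‖g i‖⁻¹ • g i)⟫))
        (fun t => ?_)).trans ?_
      · simp only [nderiv_psi' hlam i (i+1), hf1, hf2, hf3, hf4, hl0, hl1, hl2]
        ring
      · rw [if_neg (hne1 i), hB2]; ring
  · refine ⟨?_, ?_, ?_, ?_⟩
    · refine (edgeAvg_poly a i huw (nderiv g i (phiEC g lam (i+2)))
        ((1/‖g (i+2)‖) * ((-1) * ⟪g (i+2), -(‖g i‖⁻¹ • g i)⟫)) ((1/‖g (i+2)‖) * ((6) * ⟪g (i+2), -(‖g i‖⁻¹ • g i)⟫)) ((1/‖g (i+2)‖) * ((-6) * ⟪g (i+2), -(‖g i‖⁻¹ • g i)⟫)) (0) (0)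
        (fun t => ?_)).trans ?_
      · simp only [nderiv_phi hlam i (i+2), hf1, hf2, hf3, hf4, hl0, hl1, hl2]
        ring
      · rw [if_neg (hne2 i)]; ring
    · refine (edgeAvg_poly a i huw (fun x => (1/2 - lam (i+1) x) * nderiv g i (phiEC g lam (i+2)) x)
        ((1/‖g (i+2)‖) * (((1)/2) * ⟪g (i+2), -(‖g i‖⁻¹ • g i)⟫)) ((1/‖g (i+2)‖) * ((-4) * ⟪g (i+2), -(‖g i‖⁻¹ • g i)⟫)) ((1/‖g (i+2)‖) * ((9) * ⟪g (i+2), -(‖g i‖⁻¹ • g i)⟫)) ((1/‖g (i+2)‖) * ((-6) * ⟪g (i+2), -(‖g i‖⁻¹ • g i)⟫)) (0)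
        (fun t => ?_)).trans ?_
      · simp only [nderiv_phi hlam i (i+2), hf1, hf2, hf3, hf4, hl0, hl1, hl2]
        ring
      · ring
    · refine (edgeAvg_poly a i huw (nderiv g i (psiEC g lam (i+2)))
        ((1/‖g (i+2)‖) * ((8) * ⟪g i, -(‖g i‖⁻¹ • g i)⟫ + (2) * ⟪g (i+2), -(‖g i‖⁻¹ • g i)⟫)) ((1/‖g (i+2)‖) * ((-56) * ⟪g i, -(‖g i‖⁻¹ • g i)⟫ + (4) * ⟪g (i+1), -(‖g i‖⁻¹ • g i)⟫ + (-8) * ⟪g (i+2), -(‖g i‖⁻¹ • g i)⟫)) ((1/‖g (i+2)‖) * ((90) * ⟪g i, -(‖g i‖⁻¹ • g i)⟫ + (-6) * ⟪g (i+1), -(‖g i‖⁻¹ • g i)⟫ + (6) * ⟪g (i+2), -(‖g i‖⁻¹ • g i)⟫)) ((1/‖g (i+2)‖) * ((-40) * ⟪g i, -(‖g i‖⁻¹ • g i)⟫)) (0)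
        (fun t => ?_)).trans ?_
      · simp only [nderiv_psi' hlam i (i+2), hf1, hf2, hf3, hf4, hl0, hl1, hl2]
        ring
      · ring
    · refine (edgeAvg_poly a i huw (fun x => (1/2 - lam (i+1) x) * nderiv g i (psiEC g lam (i+2)) x)
        ((1/‖g (i+2)‖) * ((-4) * ⟪g i, -(‖g i‖⁻¹ • g i)⟫ + (-1) * ⟪g (i+2), -(‖g i‖⁻¹ • g i)⟫)) ((1/‖g (i+2)‖) * ((36) * ⟪g i, -(‖g i‖⁻¹ • g i)⟫ + (-2) * ⟪g (i+1), -(‖g i‖⁻¹ • g i)⟫ + (6) * ⟪g (i+2), -(‖g i‖⁻¹ • g i)⟫)) ((1/‖g (i+2)‖) * ((-101) * ⟪g i, -(‖g i‖⁻¹ • g i)⟫ + (7) * ⟪g (i+1), -(‖g i‖⁻¹ • g i)⟫ + (-11) * ⟪g (i+2), -(‖g i‖⁻¹ • g i)⟫)) ((1/‖g (i+2)‖) * ((110) * ⟪g i, -(‖g i‖⁻¹ • g i)⟫ + (-6) * ⟪g (i+1), -(‖g i‖⁻¹ • g i)⟫ + (6) * ⟪g (i+2), -(‖g i‖⁻¹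 • g i)⟫)) ((1/‖g (i+2)‖) * ((-40) * ⟪g i, -(‖g i‖⁻¹ • g i)⟫))
        (fun t => ?_)).trans ?_
      · simp only [nderiv_psi' hlam i (i+2), hf1, hf2, hf3, hf4, hl0, hl1, hl2]
        ring
      · rw [if_neg (hne2 i), hB2]; ring
end
end

section
/- Weighted normal-derivative moments of ψ_i = λ_i Λ used for FE_eq: define g_k(v) = ⨍_{e_k} λ_{k+1} ∂_n v and h_k(v) = ⨍_{e_k} λ_{k+1}² ∂_n v. Then for all i, k ∈ {1,2,3}: g_k(ψ_i) = 0 if k ≡ i (mod 3), = −(1/30)‖∇λ_k‖ if k ≡ i+1 (mod 3), and = −(1/20)‖∇λ_k‖ if k ≡ i+2 (mod 3); and h_k(ψ_i) = 0 if k ≡ i (mod 3), = −(1/60)‖∇λ_k‖ if k ≡ i+1 (mod 3), and = −(1/30)‖∇λ_k‖ if k ≡ i+2 (mod 3). -/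
open MeasureTheory
open scoped RealInnerProductSpace

noncomputable section

/-- The quartic bubbles `ψ_i = λ_i Λ`, `Λ = λ₁λ₂λ₃`. -/
def psiQ (lam : Fin 3 → Pt → ℝ) (i : Fin 3) (x : Pt) : ℝ :=
  lam i x * (lam 0 x * lam 1 x * lam 2 x)

/-- Averaging over a segment equals integrating the pulled-back function over `[0,1]`. -/
lemma seg_avg (p q : Pt) (hpq : p ≠ q) (f : Pt → ℝ) :
    (⨍ x in segment ℝ p q, f x ∂(μH[1])) = ∫ t in (0:ℝ)..1, f (AffineMap.lineMap p q t) := by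
  set γ : ℝ → Pt := fun t => AffineMap.lineMap p q t with hγ
  have hv : q - p ≠ 0 := sub_ne_zero.2 (Ne.symm hpq)
  have hvn : ‖q - p‖ ≠ 0 := norm_ne_zero_iff.2 hv
  have hγe : ∀ t, γ t = t • (q - p) + p := fun t => AffineMap.lineMap_apply_module' p q t
  have hd : ∀ s t, dist (γ s) (γ t) = dist s t * ‖q - p‖ := by
    intro s t
    rw [hγe, hγe, dist_add_right, dist_eq_norm, ← sub_smul, norm_smul, Real.dist_eq]
    rfl
  have hlip : LipschitzWith ‖q - p‖₊ γ := by
    refine LipschitzWith.of_dist_le_mul fun s t => ?_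
    rw [hd, coe_nnnorm, mul_comm]
  have hanti : AntilipschitzWith ‖q - p‖₊⁻¹ γ := by
    refine AntilipschitzWith.of_le_mul_dist fun s t => ?_
    rw [hd, NNReal.coe_inv, coe_nnnorm, inv_mul_eq_div, mul_div_assoc, div_self hvn, mul_one]
  have hemb : MeasurableEmbedding γ :=
    (hanti.isClosedEmbedding hlip.uniformContinuous).measurableEmbedding
  have hseg : segment ℝ p q = γ '' Set.Icc 0 1 := segment_eq_image_lineMap ℝ p q
  have hmeasid : (μH[1] : Measure Pt).restrict (segment ℝ p q)
      = (nndist p q : ENNReal) • Measure.map γ (volume.restrict (Set.Icc 0 1)) := by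
    ext s hs
    rw [Measure.restrict_apply hs, Measure.smul_apply, hemb.map_apply,
      Measure.restrict_apply (hemb.measurable hs)]
    have him : s ∩ segment ℝ p q = γ '' (γ ⁻¹' s ∩ Set.Icc 0 1) := by
      rw [Set.image_inter hemb.injective, Set.image_preimage_eq_inter_range, hseg]
      ext x
      simp only [Set.mem_inter_iff, Set.mem_image, Set.mem_range, and_assoc]
      constructor
      · rintro ⟨hx, t, ht, rfl⟩
        exact ⟨hx, ⟨t, rfl⟩, t, ht, rfl⟩
      · rintro ⟨hx, -, h⟩
        exact ⟨hx, h⟩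
    rw [him, MeasureTheory.hausdorffMeasure_lineMap_image (E := Pt) p q _,
      MeasureTheory.hausdorffMeasure_real, smul_eq_mul, ENNReal.smul_def, smul_eq_mul]
  rw [setAverage_eq, hmeasid, integral_smul_measure, hemb.integral_map f,
    measureReal_def, hausdorffMeasure_segment]
  have h1 : ∫ t in (0:ℝ)..1, f (γ t) = ∫ t in Set.Icc (0:ℝ) 1, f (γ t) := by
    rw [intervalIntegral.integral_of_le zero_le_one, ← integral_Icc_eq_integral_Ioc]
  rw [← h1]
  have h2 : (edist p q).toReal = dist p q := by rw [edist_dist, ENNReal.toReal_ofReal dist_nonneg]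
  have h3 : ((nndist p q : ENNReal)).toReal = dist p q := by
    rw [ENNReal.coe_toReal, coe_nndist]
  rw [h2, h3, smul_eq_mul, smul_eq_mul, ← mul_assoc, inv_mul_cancel₀ (dist_ne_zero.2 hpq), one_mul]

/-- Explicit formula for the normal derivative of the quartic bubble. -/
lemma nderiv_psiQ (g : Fin 3 → Pt) (c : Fin 3 → ℝ) (lam : Fin 3 → Pt → ℝ)
    (hlam : ∀ i x, lam i x = ⟪g i, x⟫ + c i) (i k : Fin 3) (x : Pt) :
    nderiv g k (psiQ lam i) x =
      lam i x * ((lam 0 x * lam 1 x) * ⟪g 2, -(‖g k‖⁻¹ • g k)⟫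
        + lam 2 x * (lam 0 x * ⟪g 1, -(‖g k‖⁻¹ • g k)⟫ + lam 1 x * ⟪g 0, -(‖g k‖⁻¹ • g k)⟫))
      + (lam 0 x * lam 1 x * lam 2 x) * ⟪g i, -(‖g k‖⁻¹ • g k)⟫ := by
  have hL : ∀ j, HasFDerivAt (lam j) (innerSL ℝ (g j)) x := by
    intro j
    have hfun : lam j = fun y => (innerSL ℝ (g j)) y + c j := funext fun y => by
      simp [hlam j y]
    rw [hfun]
    exact ((innerSL ℝ (g j)).hasFDerivAt).add_const (c j)
  have hp : HasFDerivAt (psiQ lam i)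
      (lam i x • ((lam 0 x * lam 1 x) • innerSL ℝ (g 2)
        + lam 2 x • (lam 0 x • innerSL ℝ (g 1) + lam 1 x • innerSL ℝ (g 0)))
      + (lam 0 x * lam 1 x * lam 2 x) • innerSL ℝ (g i)) x :=
    (hL i).mul (((hL 0).mul (hL 1)).mul (hL 2))
  have hg := hp.hasGradientAt.gradient
  rw [nderiv, hg, InnerProductSpace.toDual_symm_apply]
  simp [ContinuousLinearMap.add_apply, ContinuousLinearMap.smul_apply, innerSL_apply_apply,
    smul_eq_mul, inner_neg_right, real_inner_smul_right]
  ring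

open intervalIntegral in
/-- Integral of a quintic polynomial on `[0,1]`. -/
lemma Lcomb (c1 c2 c3 c4 c5 : ℝ) :
    ∫ t in (0:ℝ)..1, (c1*t^1 + c2*t^2 + c3*t^3 + c4*t^4 + c5*t^5)
      = c1/2 + c2/3 + c3/4 + c4/5 + c5/6 := by
  have I : ∀ (c : ℝ) (n : ℕ), IntervalIntegrable (fun t : ℝ => c*t^n) volume 0 1 :=
    fun c n => (intervalIntegrable_pow n).const_mul c
  rw [integral_add (((((I c1 1).add (I c2 2)).add (I c3 3)).add (I c4 4))) (I c5 5),
    integral_add ((((I c1 1).add (I c2 2)).add (I c3 3))) (I c4 4),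
    integral_add (((I c1 1).add (I c2 2))) (I c3 3),
    integral_add (I c1 1) (I c2 2),
    intervalIntegral.integral_const_mul, intervalIntegral.integral_const_mul, intervalIntegral.integral_const_mul, intervalIntegral.integral_const_mul,
    intervalIntegral.integral_const_mul, integral_pow, integral_pow, integral_pow, integral_pow, integral_pow]
  norm_num
  ring

/-- Weighted normal-derivative moments of `ψ_i = λ_i Λ` used for FE_eq, where
`g_k(v) = ⨍_{e_k} λ_{k+1} ∂ₙ v` and `h_k(v) = ⨍_{e_k} λ_{k+1}² ∂ₙ v`. -/
theorem psiQ_weighted_moments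
    (a : Fin 3 → Pt) (ha : AffineIndependent ℝ a)
    (g : Fin 3 → Pt) (c : Fin 3 → ℝ) (lam : Fin 3 → Pt → ℝ)
    (hlam : ∀ i x, lam i x = ⟪g i, x⟫ + c i)
    (hdual : ∀ i j, lam i (a j) = if i = j then 1 else 0) :
    ∀ i k : Fin 3,
      (k = i → edgeAvg a k (fun x => lam (k+1) x * nderiv g k (psiQ lam i) x) = 0) ∧
      (k = i + 1 → edgeAvg a k (fun x => lam (k+1) x * nderiv g k (psiQ lam i) x) =
        -(1/30) * ‖g k‖) ∧
      (k = i + 2 → edgeAvg a k (fun x => lam (k+1) x * nderiv g k (psiQ lam i) x) =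
        -(1/20) * ‖g k‖) ∧
      (k = i → edgeAvg a k (fun x => lam (k+1) x ^ 2 * nderiv g k (psiQ lam i) x) = 0) ∧
      (k = i + 1 → edgeAvg a k (fun x => lam (k+1) x ^ 2 * nderiv g k (psiQ lam i) x) =
        -(1/60) * ‖g k‖) ∧
      (k = i + 2 → edgeAvg a k (fun x => lam (k+1) x ^ 2 * nderiv g k (psiQ lam i) x) =
        -(1/30) * ‖g k‖) := by
  intro i k
  have hne12 : (k+1 : Fin 3) ≠ k+2 := by
    intro h; exact absurd (add_left_cancel h) (by decide)
  have hpq : a (k+1) ≠ a (k+2) := fun h => hne12 (ha.injective h)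
  have hγ : ∀ (j : Fin 3) (t : ℝ), lam j (AffineMap.lineMap (a (k+1)) (a (k+2)) t)
      = (1-t) * lam j (a (k+1)) + t * lam j (a (k+2)) := by
    intro j t
    rw [hlam, AffineMap.lineMap_apply_module, inner_add_right, real_inner_smul_right,
      real_inner_smul_right, hlam, hlam]
    ring
  have hgk : g k ≠ 0 := by
    intro h0
    have h1 := hdual k k
    have h2 := hdual k (k+1)
    rw [hlam, h0] at h1 h2
    simp [left_eq_add] at h1 h2
    rw [h2] at h1
    norm_num at h1
  have hip : ⟪g k, -(‖g k‖⁻¹ • g k)⟫ = -‖g k‖ := by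
    rw [inner_neg_right, real_inner_smul_right, real_inner_self_eq_norm_sq, pow_two,
      ← mul_assoc, inv_mul_cancel₀ (norm_ne_zero_iff.2 hgk), one_mul]
  have master : ∀ r : ℕ,
      edgeAvg a k (fun x => lam (k+1) x ^ r * nderiv g k (psiQ lam i) x)
        = ∫ t in (0:ℝ)..1, (1-t)^r *
            (-‖g k‖ * (((1-t) * lam i (a (k+1)) + t * lam i (a (k+2))) * ((1-t)*t))) := by
    intro r
    rw [edgeAvg, seg_avg _ _ hpq]
    apply intervalIntegral.integral_congr
    intro t _
    simp only
    rw [nderiv_psiQ g c lam hlam i k]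
    have hk := (by decide : ∀ k : Fin 3, k = 0 ∨ k = 1 ∨ k = 2) k
    rcases hk with rfl | rfl | rfl <;>
      (norm_num [-PiLp.inner_apply] at hγ hip ⊢
       simp only [hγ, hdual]
       simp (config := { decide := true }) only [ite_true, ite_false, mul_zero, zero_mul,
         add_zero, zero_add, mul_one, one_mul]
       rw [hip]
       ring)
  have m1 := master 1
  simp only [pow_one] at m1
  have m2 := master 2
  refine ⟨?_, ?_, ?_, ?_, ?_, ?_⟩ <;> intro h
  · subst h
    rw [m1]
    simp [hdual, left_eq_add]
  · subst h
    have e1 : lam i (a (i+1+1)) = 0 := by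
      rw [hdual, if_neg]
      intro hc
      rw [add_assoc] at hc
      exact absurd (left_eq_add.1 hc) (by decide)
    have e2 : lam i (a (i+1+2)) = 1 := by
      have h3 : i + 1 + 2 = i := by
        rw [add_assoc, show (1+2 : Fin 3) = 0 from rfl, add_zero]
      rw [h3, hdual, if_pos rfl]
    rw [m1, e1, e2]
    set G := ‖g (i+1)‖ with hG
    rw [intervalIntegral.integral_congr
      (g := fun t : ℝ => 0*t^1 + (-G)*t^2 + (2*G)*t^3 + (-G)*t^4 + 0*t^5)
      (fun t _ => by ring), Lcomb]
    ring
  · subst h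
    have e1 : lam i (a (i+2+1)) = 1 := by
      have h3 : i + 2 + 1 = i := by
        rw [add_assoc, show (2+1 : Fin 3) = 0 from rfl, add_zero]
      rw [h3, hdual, if_pos rfl]
    have e2 : lam i (a (i+2+2)) = 0 := by
      rw [hdual, if_neg]
      intro hc
      rw [add_assoc] at hc
      exact absurd (left_eq_add.1 hc) (by decide)
    rw [m1, e1, e2]
    set G := ‖g (i+2)‖ with hG
    rw [intervalIntegral.integral_congr
      (g := fun t : ℝ => (-G)*t^1 + (3*G)*t^2 + (-3*G)*t^3 + G*t^4 + 0*t^5)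
      (fun t _ => by ring), Lcomb]
    ring
  · subst h
    rw [m2]
    simp [hdual, left_eq_add]
  · subst h
    have e1 : lam i (a (i+1+1)) = 0 := by
      rw [hdual, if_neg]
      intro hc
      rw [add_assoc] at hc
      exact absurd (left_eq_add.1 hc) (by decide)
    have e2 : lam i (a (i+1+2)) = 1 := by
      have h3 : i + 1 + 2 = i := by
        rw [add_assoc, show (1+2 : Fin 3) = 0 from rfl, add_zero]
      rw [h3, hdual, if_pos rfl]
    rw [m2, e1, e2]
    set G := ‖g (i+1)‖ with hG
    rw [intervalIntegral.integral_congr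
      (g := fun t : ℝ => 0*t^1 + (-G)*t^2 + (3*G)*t^3 + (-3*G)*t^4 + G*t^5)
      (fun t _ => by ring), Lcomb]
    ring
  · subst h
    have e1 : lam i (a (i+2+1)) = 1 := by
      have h3 : i + 2 + 1 = i := by
        rw [add_assoc, show (2+1 : Fin 3) = 0 from rfl, add_zero]
      rw [h3, hdual, if_pos rfl]
    have e2 : lam i (a (i+2+2)) = 0 := by
      rw [hdual, if_neg]
      intro hc
      rw [add_assoc] at hc
      exact absurd (left_eq_add.1 hc) (by decide)
    rw [m2, e1, e2]
    set G := ‖g (i+2)‖ with hG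
    rw [intervalIntegral.integral_congr
      (g := fun t : ℝ => (-G)*t^1 + (4*G)*t^2 + (-6*G)*t^3 + (4*G)*t^4 + (-G)*t^5)
      (fun t _ => by ring), Lcomb]
    ring
end
end
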